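/- Relative EA advantage asymptotics: for fixed N_B > 0 and η ∈ (0,1], the ratio [g(N_S) + g(τN_S+N_B) − g(A₊) − g(A₋)] / [g(ητN_S + N_B) − g(N_B)] satisfies lim_{N_S→0⁺} lim_{τ→0⁺} (ratio · η(1+N_B)log₂(1+1/N_B) / log₂(1/N_S)) = 1, i.e. as τ → 0⁺ and then N_S → 0⁺ the ratio is asymptotically log₂(1/N_S) / [η(1+N_B)·log₂(1+1/N_B)]. -/

import Mathlib

open Filter Topology

/-- The bosonic entropy function `g(x) = (x+1)·log₂(x+1) − x·log₂ x`. -/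
noncomputable def g (x : ℝ) : ℝ := (x + 1) * Real.logb 2 (x + 1) - x * Real.logb 2 x

/-- The EA capacity of the thermal-loss channel, `C_E = g(N_S)+g(N_S')−g(A₊)−g(A₋)`
with `N_S' = τN_S+N_B`, `D = √((N_S+N_S'+1)²−4τN_S(N_S+1))`, `A_± = (D−1±(N_S'−N_S))/2`. -/
noncomputable def CE (τ NB NS : ℝ) : ℝ :=
  g NS + g (τ * NS + NB)
    - g ((Real.sqrt ((NS + (τ * NS + NB) + 1) ^ 2 - 4 * τ * NS * (NS + 1)) - 1
          + ((τ * NS + NB) - NS)) / 2)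
    - g ((Real.sqrt ((NS + (τ * NS + NB) + 1) ^ 2 - 4 * τ * NS * (NS + 1)) - 1
          - ((τ * NS + NB) - NS)) / 2)


lemma hasDerivAt_g {x : ℝ} (hx : 0 < x) :
    HasDerivAt g (Real.logb 2 (x + 1) - Real.logb 2 x) x := by
  have h1 := Real.hasDerivAt_mul_log hx.ne'
  have h2 : HasDerivAt (fun y : ℝ => (y + 1) * Real.log (y + 1)) (Real.log (x + 1) + 1) x := by
    have h3 := (Real.hasDerivAt_mul_log (show x + 1 ≠ 0 by positivity)).comp x
      ((hasDerivAt_id x).add_const 1)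
    exact h3.congr_deriv (mul_one _)
  have h4 := (h2.sub h1).div_const (Real.log 2)
  have hfun : (fun y : ℝ => ((y + 1) * Real.log (y + 1) - y * Real.log y) / Real.log 2) = g := by
    funext y
    simp [g, Real.logb, sub_div, mul_div_assoc]
  simp only [Pi.sub_apply] at h4
  rw [hfun] at h4
  refine h4.congr_deriv ?_
  simp [Real.logb, sub_div]

lemma tendsto_quot {f h : ℝ → ℝ} {a b : ℝ} (hf : HasDerivAt f a 0) (hh : HasDerivAt h b 0)
    (hf0 : f 0 = 0) (hh0 : h 0 = 0) (hb : b ≠ 0) :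
    Tendsto (fun τ => f τ / h τ) (𝓝[>] (0 : ℝ)) (𝓝 (a / b)) := by
  have hmono : 𝓝[>] (0:ℝ) ≤ 𝓝[≠] (0:ℝ) :=
    nhdsWithin_mono 0 (fun x hx => ne_of_gt hx)
  have hfs : Tendsto (fun τ => f τ / τ) (𝓝[>] (0:ℝ)) (𝓝 a) := by
    have h1 := (hasDerivAt_iff_tendsto_slope.mp hf).mono_left hmono
    refine h1.congr fun τ => ?_
    simp [slope_def_field, hf0, div_eq_mul_inv, mul_comm]
  have hhs : Tendsto (fun τ => h τ / τ) (𝓝[>] (0:ℝ)) (𝓝 b) := by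
    have h1 := (hasDerivAt_iff_tendsto_slope.mp hh).mono_left hmono
    refine h1.congr fun τ => ?_
    simp [slope_def_field, hh0, div_eq_mul_inv, mul_comm]
  have hq := hfs.div hhs hb
  refine hq.congr' ?_
  filter_upwards [self_mem_nhdsWithin] with τ hτ
  have hτ' : (τ : ℝ) ≠ 0 := ne_of_gt hτ
  simp only [Pi.div_apply]
  rw [div_div_div_comm, div_self hτ', div_one]

lemma CE_zero (NB NS : ℝ) (hNB : 0 < NB) (hNS : 0 < NS) : CE 0 NB NS = 0 := by
  have hS : (0:ℝ) < NS + NB + 1 := by linarith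
  have hF0 : (NS + (0 * NS + NB) + 1) ^ 2 - 4 * 0 * NS * (NS + 1) = (NS + NB + 1) ^ 2 := by ring
  simp only [CE, hF0, Real.sqrt_sq hS.le]
  have e1 : (NS + NB + 1 - 1 + ((0 * NS + NB) - NS)) / 2 = NB := by ring
  have e2 : (NS + NB + 1 - 1 - ((0 * NS + NB) - NS)) / 2 = NS := by ring
  rw [e1, e2]
  simp

lemma CE_hasDerivAt (NB NS : ℝ) (hNB : 0 < NB) (hNS : 0 < NS) :
    HasDerivAt (fun τ => CE τ NB NS)
      (NS * (NS + 1) / (NS + NB + 1) *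
        ((Real.logb 2 (NB + 1) - Real.logb 2 NB) + (Real.logb 2 (NS + 1) - Real.logb 2 NS))) 0 := by
  have hS : (0:ℝ) < NS + NB + 1 := by linarith
  have hlin : HasDerivAt (fun τ : ℝ => τ * NS + NB) NS 0 := by
    simpa using ((hasDerivAt_id (0:ℝ)).mul_const NS).add_const NB
  have hF : HasDerivAt (fun τ : ℝ => (NS + (τ * NS + NB) + 1) ^ 2 - 4 * τ * NS * (NS + 1))
      (2 * (NS + NB + 1) * NS - 4 * NS * (NS + 1)) 0 := by
    have h1 : HasDerivAt (fun τ : ℝ => NS + (τ * NS + NB) + 1) NS 0 := by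
      simpa using (hlin.const_add NS).add_const 1
    have h2 := h1.pow 2
    have h3 : HasDerivAt (fun τ : ℝ => 4 * τ * NS * (NS + 1)) (4 * NS * (NS + 1)) 0 := by
      simpa using (((hasDerivAt_id (0:ℝ)).const_mul 4).mul_const NS).mul_const (NS + 1)
    have h4 := h2.sub h3
    refine h4.congr_deriv ?_
    norm_num
  have hsq : HasDerivAt Real.sqrt (1 / (2 * (NS + NB + 1)))
      ((NS + (0 * NS + NB) + 1) ^ 2 - 4 * 0 * NS * (NS + 1)) := by
    have h := Real.hasDerivAt_sqrt (show ((NS + NB + 1):ℝ) ^ 2 ≠ 0 by positivity)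
    rw [Real.sqrt_sq hS.le] at h
    have he : (NS + (0 * NS + NB) + 1) ^ 2 - 4 * 0 * NS * (NS + 1) = (NS + NB + 1) ^ 2 := by ring
    rw [he]
    exact h
  have hsqrtD : HasDerivAt (fun τ : ℝ =>
      Real.sqrt ((NS + (τ * NS + NB) + 1) ^ 2 - 4 * τ * NS * (NS + 1)))
      (1 / (2 * (NS + NB + 1)) * (2 * (NS + NB + 1) * NS - 4 * NS * (NS + 1))) 0 :=
    hsq.comp 0 hF
  set sD := 1 / (2 * (NS + NB + 1)) * (2 * (NS + NB + 1) * NS - 4 * NS * (NS + 1)) with hsD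
  have hAp : HasDerivAt (fun τ : ℝ =>
      (Real.sqrt ((NS + (τ * NS + NB) + 1) ^ 2 - 4 * τ * NS * (NS + 1)) - 1
        + ((τ * NS + NB) - NS)) / 2) ((sD + NS) / 2) 0 :=
    ((hsqrtD.sub_const 1).add (hlin.sub_const NS)).div_const 2
  have hAm : HasDerivAt (fun τ : ℝ =>
      (Real.sqrt ((NS + (τ * NS + NB) + 1) ^ 2 - 4 * τ * NS * (NS + 1)) - 1
        - ((τ * NS + NB) - NS)) / 2) ((sD - NS) / 2) 0 :=
    ((hsqrtD.sub_const 1).sub (hlin.sub_const NS)).div_const 2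
  have hF0 : (NS + (0 * NS + NB) + 1) ^ 2 - 4 * 0 * NS * (NS + 1) = (NS + NB + 1) ^ 2 := by ring
  have hAp0 : (Real.sqrt ((NS + (0 * NS + NB) + 1) ^ 2 - 4 * 0 * NS * (NS + 1)) - 1
        + ((0 * NS + NB) - NS)) / 2 = NB := by
    rw [hF0, Real.sqrt_sq hS.le]; ring
  have hAm0 : (Real.sqrt ((NS + (0 * NS + NB) + 1) ^ 2 - 4 * 0 * NS * (NS + 1)) - 1
        - ((0 * NS + NB) - NS)) / 2 = NS := by
    rw [hF0, Real.sqrt_sq hS.le]; ring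
  have hg1 : HasDerivAt (fun τ : ℝ => g (τ * NS + NB))
      ((Real.logb 2 (NB + 1) - Real.logb 2 NB) * NS) 0 := by
    have hg0 : HasDerivAt g (Real.logb 2 (NB + 1) - Real.logb 2 NB) ((0:ℝ) * NS + NB) := by
      rw [show (0:ℝ) * NS + NB = NB by ring]; exact hasDerivAt_g hNB
    exact hg0.comp 0 hlin
  have hgp : HasDerivAt g (Real.logb 2 (NB + 1) - Real.logb 2 NB)
      ((Real.sqrt ((NS + (0 * NS + NB) + 1) ^ 2 - 4 * 0 * NS * (NS + 1)) - 1
        + ((0 * NS + NB) - NS)) / 2) := by rw [hAp0]; exact hasDerivAt_g hNB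
  have hgm : HasDerivAt g (Real.logb 2 (NS + 1) - Real.logb 2 NS)
      ((Real.sqrt ((NS + (0 * NS + NB) + 1) ^ 2 - 4 * 0 * NS * (NS + 1)) - 1
        - ((0 * NS + NB) - NS)) / 2) := by rw [hAm0]; exact hasDerivAt_g hNS
  have hgAp := hgp.comp 0 hAp
  have hgAm := hgm.comp 0 hAm
  have htot := (((hasDerivAt_const (0:ℝ) (g NS)).add hg1).sub hgAp).sub hgAm
  have hfun : (fun τ : ℝ => CE τ NB NS) = fun τ =>
      g NS + g (τ * NS + NB)
        - g ((Real.sqrt ((NS + (τ * NS + NB) + 1) ^ 2 - 4 * τ * NS * (NS + 1)) - 1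
              + ((τ * NS + NB) - NS)) / 2)
        - g ((Real.sqrt ((NS + (τ * NS + NB) + 1) ^ 2 - 4 * τ * NS * (NS + 1)) - 1
              - ((τ * NS + NB) - NS)) / 2) := rfl
  rw [hfun]
  refine htot.congr_deriv ?_
  rw [hsD]
  field_simp
  ring

/-- Relative EA advantage asymptotics (Eq. (14) of the paper): for fixed `N_B > 0` and
`η ∈ (0,1]`, the iterated limit
`lim_{N_S→0⁺} lim_{τ→0⁺} [C_E/(g(ητN_S+N_B)−g(N_B))]·η(1+N_B)log₂(1+1/N_B)/log₂(1/N_S) = 1`. -/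
theorem ea_advantage_asymptotics (NB η : ℝ) (hNB : 0 < NB) (hη : η ∈ Set.Ioc (0 : ℝ) 1) :
    ∃ L : ℝ → ℝ,
      (∀ NS : ℝ, 0 < NS →
        Tendsto (fun τ : ℝ =>
            (CE τ NB NS / (g (η * τ * NS + NB) - g NB))
              * (η * (1 + NB) * Real.logb 2 (1 + 1 / NB) / Real.logb 2 (1 / NS)))
          (𝓝[>] 0) (𝓝 (L NS))) ∧
      Tendsto L (𝓝[>] 0) (𝓝 1) := by
  obtain ⟨hη0, hη1⟩ := hη
  set GB : ℝ := Real.logb 2 (NB + 1) - Real.logb 2 NB with hGBdef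
  have hGBpos : 0 < GB :=
    sub_pos.mpr (Real.logb_lt_logb one_lt_two hNB (by linarith))
  have hGB' : Real.logb 2 (1 + 1 / NB) = GB := by
    rw [hGBdef, show (1:ℝ) + 1 / NB = (NB + 1) / NB by field_simp,
      Real.logb_div (by positivity) hNB.ne']
  refine ⟨fun NS => (NS + 1) * (1 + NB) * (GB + (Real.logb 2 (NS + 1) - Real.logb 2 NS)) /
      ((NS + NB + 1) * Real.logb 2 (1 / NS)), ?_, ?_⟩
  · intro NS hNS
    set GS : ℝ := Real.logb 2 (NS + 1) - Real.logb 2 NS with hGSdef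
    have hS : (0:ℝ) < NS + NB + 1 := by linarith
    have hden : HasDerivAt (fun τ : ℝ => g (η * τ * NS + NB) - g NB) (GB * (η * NS)) 0 := by
      have hlin : HasDerivAt (fun τ : ℝ => η * τ * NS + NB) (η * NS) 0 := by
        simpa using (((hasDerivAt_id (0:ℝ)).const_mul η).mul_const NS).add_const NB
      have hg0 : HasDerivAt g GB (η * (0:ℝ) * NS + NB) := by
        rw [show η * (0:ℝ) * NS + NB = NB by ring]; exact hasDerivAt_g hNB
      exact (hg0.comp 0 hlin).sub_const (g NB)
    have hden0 : g (η * (0:ℝ) * NS + NB) - g NB = 0 := by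
      rw [show η * (0:ℝ) * NS + NB = NB by ring, sub_self]
    have hbne : GB * (η * NS) ≠ 0 := by positivity
    have hquot := tendsto_quot (CE_hasDerivAt NB NS hNB hNS) hden
      (CE_zero NB NS hNB hNS) hden0 hbne
    have hfinal := hquot.mul_const
      (η * (1 + NB) * Real.logb 2 (1 + 1 / NB) / Real.logb 2 (1 / NS))
    convert hfinal using 2
    rw [hGB']
    rcases eq_or_ne (Real.logb 2 (1 / NS)) 0 with h0 | h0
    · simp only [h0, mul_zero, div_zero]
    · field_simp
      ring
  · have hP : Tendsto (fun NS : ℝ => (NS + 1) * (1 + NB) / (NS + NB + 1)) (𝓝[>] (0:ℝ)) (𝓝 1) := by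
      have hc : ContinuousAt (fun NS : ℝ => (NS + 1) * (1 + NB) / (NS + NB + 1)) 0 := by
        apply ContinuousAt.div
        · fun_prop
        · fun_prop
        · norm_num; linarith
      have h2 : Tendsto (fun NS : ℝ => (NS + 1) * (1 + NB) / (NS + NB + 1)) (𝓝[>] (0:ℝ))
          (𝓝 ((0 + 1) * (1 + NB) / (0 + NB + 1))) := hc.tendsto.mono_left nhdsWithin_le_nhds
      rw [show ((0:ℝ) + 1) * (1 + NB) / (0 + NB + 1) = 1 by
        rw [zero_add, one_mul, zero_add, add_comm NB 1, div_self (by linarith)]] at h2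
      exact h2
    have hlogtop : Tendsto (fun NS : ℝ => Real.logb 2 (1 / NS)) (𝓝[>] (0:ℝ)) atTop := by
      have h1 : Tendsto (fun NS : ℝ => (1:ℝ) / NS) (𝓝[>] (0:ℝ)) atTop := by
        simpa [one_div] using tendsto_inv_nhdsGT_zero (𝕜 := ℝ)
      exact (Real.tendsto_logb_atTop one_lt_two).comp h1
    have hnum : Tendsto (fun NS : ℝ => GB + Real.logb 2 (NS + 1)) (𝓝[>] (0:ℝ)) (𝓝 GB) := by
      have hc : ContinuousAt (fun NS : ℝ => GB + Real.logb 2 (NS + 1)) 0 := by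
        apply ContinuousAt.add continuousAt_const
        exact (Real.continuousAt_logb (by norm_num)).comp (by fun_prop)
      have h2 : Tendsto (fun NS : ℝ => GB + Real.logb 2 (NS + 1)) (𝓝[>] (0:ℝ))
          (𝓝 (GB + Real.logb 2 (0 + 1))) := hc.tendsto.mono_left nhdsWithin_le_nhds
      simpa using h2
    have hQ : Tendsto (fun NS : ℝ => (GB + Real.logb 2 (NS + 1)) / Real.logb 2 (1 / NS))
        (𝓝[>] (0:ℝ)) (𝓝 0) := hnum.div_atTop hlogtop
    have hmain := hP.mul (hQ.add (tendsto_const_nhds (x := (1:ℝ))))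
    rw [show (1:ℝ) * (0 + 1) = 1 by ring] at hmain
    refine hmain.congr' ?_
    filter_upwards [Ioo_mem_nhdsGT_of_mem (by norm_num : (0:ℝ) ∈ Set.Ico 0 1)]
      with NS hNS
    obtain ⟨h0, h1⟩ := hNS
    have hinv : Real.logb 2 (1 / NS) = -Real.logb 2 NS := by
      rw [one_div, Real.logb_inv]
    have hlb : 0 < Real.logb 2 (1 / NS) := by
      apply Real.logb_pos one_lt_two
      rw [one_div]
      exact (one_lt_inv₀ h0).mpr h1
    have hlbne : Real.logb 2 (1 / NS) ≠ 0 := hlb.ne'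
    have hS : (0:ℝ) < NS + NB + 1 := by linarith
    rw [hinv] at hlbne ⊢
    field_simp
    ring_nf
    rw [mul_inv_cancel₀ (neg_ne_zero.mp hlbne)]
    ring
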